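/- arXiv:2309.00307 — 6 statements merged into one kernel-verified Lean document; each statement's English description precedes it below -/
import Mathlib

section
/- Let x_{t+1} be the best response update x_{i,t+1} = argmin_{x_i ∈ X_i} C_i(x_i, x_{-i,t}) in an m-strongly monotone N-player convex game where each ∇_i C_i(x_i, x_{-i}) is L-Lipschitz in x_{-i}, with m > L√(N-1). Then for every episode t, ‖x_{t+1} - x*‖ ≤ (L√(N-1)/m) ‖x_t - x*‖, where x* is the unique Nash equilibrium. -/
open scoped RealInnerProductSpace

/-- One-step contraction of the best response algorithm in an `m`-strongly monotone
`N`-player convex game whose partial gradients are `L`-Lipschitz in the opponents'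
actions, with `m > L √(N-1)`. -/
theorem best_response_one_step_contraction
    {N : ℕ} {E : Fin N → Type*}
    [∀ i, NormedAddCommGroup (E i)] [∀ i, InnerProductSpace ℝ (E i)]
    (X : ∀ i, Set (E i)) (C : Fin N → PiLp 2 E → ℝ)
    (gradC : ∀ i : Fin N, PiLp 2 E → E i)
    (m L : ℝ) (hm : 0 < m) (hL : 0 ≤ L)
    (hmL : L * Real.sqrt ((N : ℝ) - 1) < m)
    (x : ℕ → PiLp 2 E) (xstar : PiLp 2 E)
    (hx : ∀ t i, x t i ∈ X i) (hxs : ∀ i, xstar i ∈ X i)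
    -- strong monotonicity
    (hmono : ∀ y z : PiLp 2 E, (∀ i, y i ∈ X i) → (∀ i, z i ∈ X i) →
      m * ‖y - z‖ ^ 2 ≤ ∑ i, ⟪gradC i y - gradC i z, y i - z i⟫)
    -- the partial gradient is L-Lipschitz in the other agents' actions
    (hLip : ∀ i : Fin N, ∀ y z : PiLp 2 E, y i = z i →
      ‖gradC i y - gradC i z‖ ≤ L * ‖y - z‖)
    -- best response update: x_{i,t+1} = argmin_{x_i ∈ X_i} C_i(x_i, x_{-i,t})
    (hBRmin : ∀ t i, x (t + 1) i ∈ X i ∧ ∀ yi ∈ X i,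
      C i (WithLp.toLp 2 (Function.update (x t) i (x (t + 1) i))) ≤ C i (WithLp.toLp 2 (Function.update (x t) i yi)))
    -- first-order optimality of the best response point
    (hFOC : ∀ t i, ∀ yi ∈ X i,
      (0 : ℝ) ≤ ⟪gradC i (WithLp.toLp 2 (Function.update (x t) i (x (t + 1) i))), yi - x (t + 1) i⟫)
    -- x* is a Nash equilibrium
    (hNash : ∀ i, ∀ yi ∈ X i, (0 : ℝ) ≤ ⟪gradC i xstar, yi - xstar i⟫) :
    ∀ t, ‖x (t + 1) - xstar‖ ≤ (L * Real.sqrt ((N : ℝ) - 1) / m) * ‖x t - xstar‖ := by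
  classical
  intro t
  set y : PiLp 2 E := x (t + 1) with hy
  set q : ℝ := L * Real.sqrt ((N : ℝ) - 1) with hqdef
  have hq0 : 0 ≤ q := mul_nonneg hL (Real.sqrt_nonneg _)
  set d : ℝ := ‖y - xstar‖ with hddef
  have hd0 : 0 ≤ d := norm_nonneg _
  have hS0 : (0:ℝ) ≤ ‖x t - xstar‖ := norm_nonneg _
  set u : Fin N → PiLp 2 E := fun i => WithLp.toLp 2 (Function.update (x t) i (y i)) with hu
  set v : Fin N → PiLp 2 E := fun i => WithLp.toLp 2 (Function.update xstar i (y i)) with hv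
  -- per-coordinate strong monotonicity
  have hA : ∀ i, m * ‖y i - xstar i‖ ^ 2 ≤
      ⟪gradC i (v i) - gradC i xstar, y i - xstar i⟫ := by
    intro i
    have hmem : ∀ j, (v i) j ∈ X j := by
      intro j
      by_cases h : j = i
      · subst h; simpa [hv] using hx (t + 1) j
      · simpa [hv, Function.update_of_ne h] using hxs j
    have h1 := hmono (v i) xstar hmem hxs
    have hnorm : ‖(v i) - xstar‖ ^ 2 = ‖y i - xstar i‖ ^ 2 := by
      rw [PiLp.norm_sq_eq_of_L2]
      rw [Finset.sum_eq_single i]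
      · simp [hv]
      · intro j _ hj
        simp [hv, Function.update_of_ne hj]
      · simp
    have hsum : ∑ j, ⟪gradC j (v i) - gradC j xstar, (v i) j - xstar j⟫ =
        ⟪gradC i (v i) - gradC i xstar, y i - xstar i⟫ := by
      rw [Finset.sum_eq_single i]
      · simp [hv]
      · intro j _ hj
        simp [hv, Function.update_of_ne hj]
      · simp
    calc m * ‖y i - xstar i‖ ^ 2 = m * ‖(v i) - xstar‖ ^ 2 := by rw [hnorm]
      _ ≤ ∑ j, ⟪gradC j (v i) - gradC j xstar, (v i) j - xstar j⟫ := by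
          simpa using h1
      _ = _ := hsum
  have hd2 : d ^ 2 = ∑ i, ‖y i - xstar i‖ ^ 2 := by
    rw [hddef, PiLp.norm_sq_eq_of_L2]
    simp
  have hstep1 : m * d ^ 2 ≤
      ∑ i, ⟪gradC i (v i) - gradC i xstar, y i - xstar i⟫ := by
    rw [hd2, Finset.mul_sum]
    exact Finset.sum_le_sum fun i _ => hA i
  -- FOC + Nash
  have hstep2 : ∀ i, ⟪gradC i (v i) - gradC i xstar, y i - xstar i⟫ ≤
      ⟪gradC i (v i) - gradC i (u i), y i - xstar i⟫ := by
    intro i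
    have hF : (0:ℝ) ≤ ⟪gradC i (u i), xstar i - y i⟫ := hFOC t i (xstar i) (hxs i)
    have hN : (0:ℝ) ≤ ⟪gradC i xstar, y i - xstar i⟫ := hNash i (y i) (hx (t + 1) i)
    have hF' : ⟪gradC i (u i), y i - xstar i⟫ ≤ 0 := by
      have heq : ⟪gradC i (u i), xstar i - y i⟫ = - ⟪gradC i (u i), y i - xstar i⟫ := by
        rw [← inner_neg_right]; congr 1; abel
      rw [heq] at hF; linarith
    simp only [inner_sub_left]
    linarith
  -- Lipschitz bound on each term
  have hstep3 : ∀ i, ⟪gradC i (v i) - gradC i (u i), y i - xstar i⟫ ≤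
      (L * ‖v i - u i‖) * ‖y i - xstar i‖ := by
    intro i
    have hCS := real_inner_le_norm (gradC i (v i) - gradC i (u i)) (y i - xstar i)
    have hLi : ‖gradC i (v i) - gradC i (u i)‖ ≤ L * ‖v i - u i‖ := by
      apply hLip
      simp [hv, hu]
    calc ⟪gradC i (v i) - gradC i (u i), y i - xstar i⟫
        ≤ ‖gradC i (v i) - gradC i (u i)‖ * ‖y i - xstar i‖ := hCS
      _ ≤ (L * ‖v i - u i‖) * ‖y i - xstar i‖ :=
          mul_le_mul_of_nonneg_right hLi (norm_nonneg _)
  -- ∑ ‖v i - u i‖²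
  have hvu : ∑ i, ‖v i - u i‖ ^ 2 = ((N : ℝ) - 1) * ‖x t - xstar‖ ^ 2 := by
    have hSsum : ∑ j, ‖x t j - xstar j‖ ^ 2 = ‖x t - xstar‖ ^ 2 := by
      rw [PiLp.norm_sq_eq_of_L2]; simp
    have hterm : ∀ i, ‖v i - u i‖ ^ 2 =
        ‖x t - xstar‖ ^ 2 - ‖x t i - xstar i‖ ^ 2 := by
      intro i
      rw [PiLp.norm_sq_eq_of_L2]
      have : ∀ j, ‖(v i - u i) j‖ ^ 2 =
          (‖x t j - xstar j‖ ^ 2 - if j = i then ‖x t i - xstar i‖ ^ 2 else 0) := by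
        intro j
        by_cases h : j = i
        · subst h; simp [hv, hu]
        · have : (v i - u i) j = xstar j - x t j := by
            simp [hv, hu, Function.update_of_ne h]
          rw [this, norm_sub_rev]
          simp [h]
      rw [Finset.sum_congr rfl fun j _ => this j, Finset.sum_sub_distrib, hSsum]
      simp
    rw [Finset.sum_congr rfl fun i _ => hterm i, Finset.sum_sub_distrib, hSsum,
      Finset.sum_const, Finset.card_univ, Fintype.card_fin, nsmul_eq_mul]
    ring
  -- Cauchy-Schwarz
  have hCS : ∑ i, (L * ‖v i - u i‖) * ‖y i - xstar i‖ ≤ q * ‖x t - xstar‖ * d := by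
    have h1 : ∑ i, ‖v i - u i‖ * ‖y i - xstar i‖ ≤
        Real.sqrt (∑ i, ‖v i - u i‖ ^ 2) * Real.sqrt (∑ i, ‖y i - xstar i‖ ^ 2) :=
      Real.sum_mul_le_sqrt_mul_sqrt _ _ _
    have h2 : Real.sqrt (∑ i, ‖v i - u i‖ ^ 2) = Real.sqrt ((N : ℝ) - 1) * ‖x t - xstar‖ := by
      rw [hvu, Real.sqrt_mul' _ (sq_nonneg _), Real.sqrt_sq hS0]
    have h3 : Real.sqrt (∑ i, ‖y i - xstar i‖ ^ 2) = d := by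
      rw [← hd2, Real.sqrt_sq hd0]
    calc ∑ i, (L * ‖v i - u i‖) * ‖y i - xstar i‖
        = L * ∑ i, ‖v i - u i‖ * ‖y i - xstar i‖ := by
          rw [Finset.mul_sum]
          exact Finset.sum_congr rfl fun i _ => by ring
      _ ≤ L * (Real.sqrt ((N : ℝ) - 1) * ‖x t - xstar‖ * d) := by
          apply mul_le_mul_of_nonneg_left _ hL
          rw [← h2, ← h3]; exact h1.trans_eq (by ring)
      _ = q * ‖x t - xstar‖ * d := by rw [hqdef]; ring
  have key : m * d ^ 2 ≤ q * ‖x t - xstar‖ * d :=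
    hstep1.trans <| (Finset.sum_le_sum fun i _ => (hstep2 i).trans (hstep3 i)).trans hCS
  -- conclude
  rcases hd0.eq_or_lt with h0 | hdpos
  · have hdz : d = 0 := h0.symm
    rw [hdz]
    positivity
  · have h1 : m * d ≤ q * ‖x t - xstar‖ := by
      have := (mul_le_mul_iff_of_pos_right hdpos).mp (by nlinarith [key] : (m * d) * d ≤ (q * ‖x t - xstar‖) * d)
      exact this
    rw [div_mul_eq_mul_div]
    exact (le_div_iff₀ hm).mpr (by linarith)
end

section
/- If x_{i,t+1} is the minimizer of C_i(·, x_{-i,t}) over the convex set X_i and the game is m-strongly monotone, then for the Nash equilibrium x* one has m‖x_i* - x_{i,t+1}‖² ≤ ⟨∇_i C_i(x_i*, x_{-i,t}), x_i* - x_{i,t+1}⟩ for each agent i. -/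
open scoped RealInnerProductSpace

/-- Key inequality of Proposition 1: for the best response point `x_{i,t+1}` and the
Nash equilibrium `x*`, `m ‖x_i* - x_{i,t+1}‖² ≤ ⟪∇_i C_i(x_i*, x_{-i,t}), x_i* - x_{i,t+1}⟫`. -/
theorem best_response_key_inequality
    {N : ℕ} {E : Fin N → Type*}
    [∀ i, NormedAddCommGroup (E i)] [∀ i, InnerProductSpace ℝ (E i)]
    (X : ∀ i, Set (E i)) (C : Fin N → PiLp 2 E → ℝ)
    (gradC : ∀ i : Fin N, PiLp 2 E → E i)
    (m : ℝ) (hm : 0 < m)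
    (x : ℕ → PiLp 2 E) (xstar : PiLp 2 E)
    (hx : ∀ t i, x t i ∈ X i) (hxs : ∀ i, xstar i ∈ X i)
    (hmono : ∀ y z : PiLp 2 E, (∀ i, y i ∈ X i) → (∀ i, z i ∈ X i) →
      m * ‖y - z‖ ^ 2 ≤ ∑ i, ⟪gradC i y - gradC i z, y i - z i⟫)
    (hBRmin : ∀ t i, x (t + 1) i ∈ X i ∧ ∀ yi ∈ X i,
      C i (WithLp.toLp 2 (Function.update (x t) i (x (t + 1) i))) ≤
        C i (WithLp.toLp 2 (Function.update (x t) i yi)))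
    (hFOC : ∀ t i, ∀ yi ∈ X i,
      (0 : ℝ) ≤ ⟪gradC i (WithLp.toLp 2 (Function.update (x t) i (x (t + 1) i))), yi - x (t + 1) i⟫)
    (hNash : ∀ i, ∀ yi ∈ X i, (0 : ℝ) ≤ ⟪gradC i xstar, yi - xstar i⟫) :
    ∀ t i, m * ‖xstar i - x (t + 1) i‖ ^ 2 ≤
      ⟪gradC i (WithLp.toLp 2 (Function.update (x t) i (xstar i))), xstar i - x (t + 1) i⟫ := by
  intro t i
  set y : PiLp 2 E := WithLp.toLp 2 (Function.update (x t) i (xstar i)) with hy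
  set z : PiLp 2 E := WithLp.toLp 2 (Function.update (x t) i (x (t + 1) i)) with hz
  have hyX : ∀ j, y j ∈ X j := by
    intro j
    by_cases h : j = i
    · subst h; simp [hy, hxs j]
    · simp [hy, Function.update_of_ne h, hx t j]
  have hzX : ∀ j, z j ∈ X j := by
    intro j
    by_cases h : j = i
    · subst h; simp only [hz, PiLp.toLp_apply, Function.update_self]; exact (hBRmin _ _).1
    · simp [hz, Function.update_of_ne h, hx t j]
  have hdiff : ∀ j, (y - z) j = if h : j = i then
      (h ▸ (xstar i - x (t + 1) i)) else 0 := by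
    intro j
    by_cases h : j = i
    · subst h; simp [hy, hz, PiLp.sub_apply]
    · simp [hy, hz, PiLp.sub_apply, Function.update_of_ne h, h]
  have hnorm : ‖y - z‖ ^ 2 = ‖xstar i - x (t + 1) i‖ ^ 2 := by
    rw [PiLp.norm_sq_eq_of_L2]
    rw [Finset.sum_eq_single i]
    · rw [hdiff i]; simp
    · intro j _ hj; rw [hdiff j]; simp [hj]
    · intro h; exact absurd (Finset.mem_univ i) h
  have hsum : ∑ j, ⟪gradC j y - gradC j z, y j - z j⟫
      = ⟪gradC i y - gradC i z, xstar i - x (t + 1) i⟫ := by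
    rw [Finset.sum_eq_single i]
    · have : y i - z i = xstar i - x (t + 1) i := by simp [hy, hz]
      rw [this]
    · intro j _ hj
      have : y j - z j = 0 := by
        simp [hy, hz, Function.update_of_ne hj]
      rw [this, inner_zero_right]
    · intro h; exact absurd (Finset.mem_univ i) h
  have hmain := hmono y z hyX hzX
  rw [hnorm, hsum, inner_sub_left] at hmain
  have hfoc := hFOC t i (xstar i) (hxs i)
  have : y i = xstar i := by simp [hy]
  linarith [hmain, hfoc]
end

section
/- For best response iterates in a time-invariant game, Σ_{t=1}^T C_i(x_t) - Σ_{t=1}^T min_{x_i} C_i(x_i, x_{-i,t}) ≤ C_i(x_1) + L_0 Σ_{t=1}^T ‖x_{t+1} - x_t‖ for every agent i, assuming C_i is L_0-Lipschitz in x_{-i} and C_i ≥ 0. -/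
/-- For best response iterates in a time-invariant game with `L₀`-Lipschitz (in the
opponents' actions) nonnegative costs,
`Σ_t C_i(x_t) - Σ_t min_{x_i} C_i(x_i, x_{-i,t}) ≤ C_i(x_1) + L₀ Σ_t ‖x_{t+1} - x_t‖`. -/
theorem best_response_regret_telescoping
    {N : ℕ} {E : Fin N → Type*}
    [∀ i, NormedAddCommGroup (E i)] [∀ i, InnerProductSpace ℝ (E i)]
    (X : ∀ i, Set (E i)) (C : Fin N → PiLp 2 E → ℝ)
    (L₀ : ℝ) (hL₀ : 0 ≤ L₀)
    (x : ℕ → PiLp 2 E)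
    (hx : ∀ t i, x t i ∈ X i)
    -- the cost `C_i(x_i, ·)` is `L₀`-Lipschitz in the other agents' actions
    (hLip₀ : ∀ i : Fin N, ∀ y z : PiLp 2 E, y i = z i →
      |C i y - C i z| ≤ L₀ * ‖y - z‖)
    -- the costs are nonnegative
    (hCpos : ∀ i, ∀ y : PiLp 2 E, 0 ≤ C i y)
    -- best response update: `C_i(x_{i,t+1}, x_{-i,t}) = min_{x_i ∈ X_i} C_i(x_i, x_{-i,t})`
    (hBRmin : ∀ t i, x (t + 1) i ∈ X i ∧ ∀ yi ∈ X i,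
      C i (WithLp.toLp 2 (Function.update (x t) i (x (t + 1) i))) ≤ C i (WithLp.toLp 2 (Function.update (x t) i yi))) :
    ∀ T : ℕ, ∀ i : Fin N,
      ∑ t ∈ Finset.Icc 1 T, C i (x t) -
          ∑ t ∈ Finset.Icc 1 T, C i (WithLp.toLp 2 (Function.update (x t) i (x (t + 1) i))) ≤
        C i (x 1) + L₀ * ∑ t ∈ Finset.Icc 1 T, ‖x (t + 1) - x t‖ := by
  intro T i
  -- key pointwise bound
  have key : ∀ t, C i (x (t + 1)) ≤
      C i (WithLp.toLp 2 (Function.update (x t) i (x (t + 1) i))) + L₀ * ‖x (t + 1) - x t‖ := by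
    intro t
    set u : PiLp 2 E := WithLp.toLp 2 (Function.update (x t) i (x (t + 1) i)) with hu
    have heq : x (t + 1) i = u i := by rw [hu]; simp
    have hlip := hLip₀ i (x (t + 1)) u heq
    have hnorm : ‖x (t + 1) - u‖ ≤ ‖x (t + 1) - x t‖ := by
      have h1 := PiLp.norm_sq_eq_of_L2 E (x (t + 1) - u)
      have h2 := PiLp.norm_sq_eq_of_L2 E (x (t + 1) - x t)
      rw [← pow_le_pow_iff_left₀ (norm_nonneg _) (norm_nonneg _) two_ne_zero, h1, h2]
      refine Finset.sum_le_sum fun j _ => pow_le_pow_left₀ (norm_nonneg _) ?_ 2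
      by_cases hj : j = i
      · subst hj
        rw [PiLp.sub_apply, ← heq, sub_self, norm_zero]
        exact norm_nonneg _
      · have : u j = x t j := by rw [hu]; exact Function.update_of_ne hj _ _
        rw [PiLp.sub_apply, PiLp.sub_apply, this]
    have habs := (abs_le.mp hlip).2
    nlinarith [mul_le_mul_of_nonneg_left hnorm hL₀]
  -- summed bound
  have claim : ∀ S, ∑ t ∈ Finset.Icc 1 (S + 1), C i (x t) ≤
      C i (x 1) + ∑ t ∈ Finset.Icc 1 S,
        (C i (WithLp.toLp 2 (Function.update (x t) i (x (t + 1) i))) + L₀ * ‖x (t + 1) - x t‖) := by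
    intro S
    induction S with
    | zero => simp
    | succ S ih =>
      have e1 : ∑ t ∈ Finset.Icc 1 (S + 1 + 1), C i (x t)
          = ∑ t ∈ Finset.Icc 1 (S + 1), C i (x t) + C i (x (S + 1 + 1)) :=
        Finset.sum_Icc_succ_top (by omega) _
      have e2 : ∑ t ∈ Finset.Icc 1 (S + 1),
            (C i (WithLp.toLp 2 (Function.update (x t) i (x (t + 1) i))) + L₀ * ‖x (t + 1) - x t‖)
          = ∑ t ∈ Finset.Icc 1 S,
            (C i (WithLp.toLp 2 (Function.update (x t) i (x (t + 1) i))) + L₀ * ‖x (t + 1) - x t‖)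
            + (C i (WithLp.toLp 2 (Function.update (x (S + 1)) i (x (S + 1 + 1) i)))
              + L₀ * ‖x (S + 1 + 1) - x (S + 1)‖) :=
        Finset.sum_Icc_succ_top (by omega) _
      rw [e1, e2]
      have := key (S + 1)
      linarith
  cases T with
  | zero =>
    rw [Finset.Icc_eq_empty_of_lt (by omega : (0:ℕ) < 1)]
    simp [hCpos i (x 1)]
  | succ S =>
    have hc := claim S
    have hsplit : ∑ t ∈ Finset.Icc 1 S,
          (C i (WithLp.toLp 2 (Function.update (x t) i (x (t + 1) i))) + L₀ * ‖x (t + 1) - x t‖)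
        = ∑ t ∈ Finset.Icc 1 S, C i (WithLp.toLp 2 (Function.update (x t) i (x (t + 1) i)))
          + L₀ * ∑ t ∈ Finset.Icc 1 S, ‖x (t + 1) - x t‖ := by
      rw [Finset.sum_add_distrib, Finset.mul_sum]
    rw [hsplit] at hc
    have e1 : ∑ t ∈ Finset.Icc 1 (S + 1), C i (x t)
        = ∑ t ∈ Finset.Icc 1 S, C i (x t) + C i (x (S + 1)) :=
      Finset.sum_Icc_succ_top (by omega) _
    have e2 : ∑ t ∈ Finset.Icc 1 (S + 1), C i (WithLp.toLp 2 (Function.update (x t) i (x (t + 1) i)))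
        = ∑ t ∈ Finset.Icc 1 S, C i (WithLp.toLp 2 (Function.update (x t) i (x (t + 1) i)))
          + C i (WithLp.toLp 2 (Function.update (x (S + 1)) i (x (S + 1 + 1) i))) :=
      Finset.sum_Icc_succ_top (by omega) _
    have e3 : ∑ t ∈ Finset.Icc 1 (S + 1), ‖x (t + 1) - x t‖
        = ∑ t ∈ Finset.Icc 1 S, ‖x (t + 1) - x t‖ + ‖x (S + 1 + 1) - x (S + 1)‖ :=
      Finset.sum_Icc_succ_top (by omega) _
    rw [e1, e2, e3]
    have hmpos : 0 ≤ C i (WithLp.toLp 2 (Function.update (x (S + 1)) i (x (S + 1 + 1) i))) := hCpos i _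
    have hnpos : 0 ≤ L₀ * ‖x (S + 1 + 1) - x (S + 1)‖ := mul_nonneg hL₀ (norm_nonneg _)
    have hS1 : ∑ t ∈ Finset.Icc 1 (S + 1), C i (x t) ≤
        C i (x 1) + (∑ t ∈ Finset.Icc 1 S, C i (WithLp.toLp 2 (Function.update (x t) i (x (t + 1) i)))
          + L₀ * ∑ t ∈ Finset.Icc 1 S, ‖x (t + 1) - x t‖) := hc
    rw [e1] at hS1
    linarith
end

section
/- Under the time-varying best response scheme with uniform contraction factor ρ_m = max_t {L_t√(N-1)/m_t} < 1, the equilibrium tracking error satisfies Err(T) = Σ_{t=1}^T ‖x_t - x_t*‖² ≤ ‖x_1 - x_1*‖²/(1-ρ_m) + V_T/(1-ρ_m)², where V_T = Σ_{t=1}^T ‖x_t* - x_{t+1}*‖² is the equilibrium variation. -/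
open scoped RealInnerProductSpace

/-- Weighted AM-GM step: `(ρa+v)² ≤ ρa² + v²/(1-ρ)` for `0 ≤ ρ < 1`. -/
lemma br_sq_step {ρ a v : ℝ} (hρ0 : 0 ≤ ρ) (hρ1 : ρ < 1) (ha : 0 ≤ a) (hv : 0 ≤ v) :
    (ρ * a + v) ^ 2 ≤ ρ * a ^ 2 + v ^ 2 / (1 - ρ) := by
  have h1 : 0 < 1 - ρ := by linarith
  have key : (1 - ρ) * (ρ * a + v) ^ 2 ≤ (1 - ρ) * (ρ * a ^ 2) + v ^ 2 := by
    nlinarith [mul_nonneg hρ0 (sq_nonneg ((1 - ρ) * a - v))]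
  rw [← mul_le_mul_iff_right₀ h1]
  have h2 : (1 - ρ) * (ρ * a ^ 2 + v ^ 2 / (1 - ρ)) = (1 - ρ) * (ρ * a ^ 2) + v ^ 2 := by
    field_simp
  rw [h2]
  exact key

/-- Equilibrium tracking error bound for the time-varying best response scheme:
`Err(T) = Σ_{t=1}^T ‖x_t - x*_t‖² ≤ ‖x_1 - x*_1‖²/(1-ρ_m) + V_T/(1-ρ_m)²`,
where `ρ_m = max_t L_t √(N-1)/m_t < 1` and `V_T = Σ_{t=1}^T ‖x*_t - x*_{t+1}‖²`. -/
theorem best_response_equilibrium_tracking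
    {N : ℕ} {E : Fin N → Type*}
    [∀ i, NormedAddCommGroup (E i)] [∀ i, InnerProductSpace ℝ (E i)]
    (X : ∀ i, Set (E i)) (C : ℕ → Fin N → PiLp 2 E → ℝ)
    (gradC : ℕ → ∀ i : Fin N, PiLp 2 E → E i)
    (m L : ℕ → ℝ) (ρm : ℝ) (hm : ∀ t, 0 < m t) (hL : ∀ t, 0 ≤ L t)
    (hmL : ∀ t, L t * Real.sqrt ((N : ℝ) - 1) < m t)
    -- `ρ_m = max_t ρ_t < 1`
    (hρm : ∀ t, L t * Real.sqrt ((N : ℝ) - 1) / m t ≤ ρm) (hρm1 : ρm < 1)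
    (x : ℕ → PiLp 2 E) (xstar : ℕ → PiLp 2 E)
    (hx : ∀ t i, x t i ∈ X i) (hxs : ∀ t i, xstar t i ∈ X i)
    (hmono : ∀ t, ∀ y z : PiLp 2 E, (∀ i, y i ∈ X i) → (∀ i, z i ∈ X i) →
      m t * ‖y - z‖ ^ 2 ≤ ∑ i, ⟪gradC t i y - gradC t i z, y i - z i⟫)
    (hLip : ∀ t, ∀ i : Fin N, ∀ y z : PiLp 2 E, y i = z i →
      ‖gradC t i y - gradC t i z‖ ≤ L t * ‖y - z‖)
    (hBRmin : ∀ t i, x (t + 1) i ∈ X i ∧ ∀ yi ∈ X i,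
      C t i (WithLp.toLp 2 (Function.update (x t) i (x (t + 1) i))) ≤
        C t i (WithLp.toLp 2 (Function.update (x t) i yi)))
    (hFOC : ∀ t i, ∀ yi ∈ X i,
      (0 : ℝ) ≤ ⟪gradC t i (WithLp.toLp 2 (Function.update (x t) i (x (t + 1) i))), yi - x (t + 1) i⟫)
    (hNash : ∀ t i, ∀ yi ∈ X i, (0 : ℝ) ≤ ⟪gradC t i (xstar t), yi - xstar t i⟫) :
    ∀ T : ℕ,
      ∑ t ∈ Finset.Icc 1 T, ‖x t - xstar t‖ ^ 2 ≤
        ‖x 1 - xstar 1‖ ^ 2 / (1 - ρm) +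
          (∑ t ∈ Finset.Icc 1 T, ‖xstar t - xstar (t + 1)‖ ^ 2) / (1 - ρm) ^ 2 := by
  have hρ0 : 0 ≤ ρm :=
    le_trans (div_nonneg (mul_nonneg (hL 0) (Real.sqrt_nonneg _)) (hm 0).le) (hρm 0)
  have h1ρ : 0 < 1 - ρm := by linarith
  -- Step 1: per-step contraction toward the current equilibrium
  have key : ∀ t, ‖x (t + 1) - xstar t‖ ≤ ρm * ‖x t - xstar t‖ := by
    intro t
    rcases Nat.eq_zero_or_pos N with hN | hN
    · have hz2 : ‖x (t + 1) - xstar t‖ ^ 2 = 0 := by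
        rw [PiLp.norm_sq_eq_of_L2]
        apply Finset.sum_eq_zero
        intro i _
        exact absurd i.pos (by omega)
      have h0 : ‖x (t + 1) - xstar t‖ = 0 := by
        have := norm_nonneg (x (t + 1) - xstar t); nlinarith
      rw [h0]
      exact mul_nonneg hρ0 (norm_nonneg _)
    · -- N ≥ 1 : the real argument
      set Δ : PiLp 2 E := xstar t - x t with hΔ
      -- per-coordinate bound
      have hper : ∀ i : Fin N, (m t) ^ 2 * ‖x (t + 1) i - xstar t i‖ ^ 2 ≤
          (L t) ^ 2 * (‖Δ‖ ^ 2 - ‖Δ i‖ ^ 2) := by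
        intro i
        set b : E i := x (t + 1) i with hb
        set w : PiLp 2 E := WithLp.toLp 2 (Function.update (xstar t) i b) with hw
        set z : PiLp 2 E := WithLp.toLp 2 (Function.update (x t) i b) with hz
        have hwi : w i = b := Function.update_self i b (xstar t).ofLp
        have hzi : z i = b := Function.update_self i b (x t).ofLp
        have h1 : (0 : ℝ) ≤ ⟪gradC t i z, xstar t i - b⟫ := hFOC t i _ (hxs t i)
        have h2 : (0 : ℝ) ≤ ⟪gradC t i (xstar t), b - xstar t i⟫ :=
          hNash t i b (hx (t + 1) i)
        -- strong monotonicity between w and xstar t (they differ only at i)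
        have hwX : ∀ j, w j ∈ X j := by
          intro j
          by_cases h : j = i
          · rw [h, hwi]; exact hx (t + 1) i
          · rw [hw, WithLp.ofLp_toLp, Function.update_of_ne h]; exact hxs t j
        have hmonosum := hmono t w (xstar t) hwX (hxs t)
        have hsum : ∑ j, ⟪gradC t j w - gradC t j (xstar t), w j - xstar t j⟫ =
            ⟪gradC t i w - gradC t i (xstar t), b - xstar t i⟫ := by
          refine (Finset.sum_eq_single_of_mem i (Finset.mem_univ i) ?_).trans ?_
          · intro j _ h
            simp only [hw, WithLp.ofLp_toLp, Function.update_of_ne h, sub_self, inner_zero_right]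
          · rw [hwi]
        have hnw : ‖w - xstar t‖ ^ 2 = ‖b - xstar t i‖ ^ 2 := by
          rw [PiLp.norm_sq_eq_of_L2]
          refine (Finset.sum_eq_single_of_mem i (Finset.mem_univ i) ?_).trans ?_
          · intro j _ h
            have hj : (w - xstar t) j = 0 := by
              show w j - xstar t j = 0
              rw [hw, WithLp.ofLp_toLp, Function.update_of_ne h, sub_self]
            rw [hj, norm_zero]
            ring
          · have hi : (w - xstar t) i = b - xstar t i := by
              show w i - xstar t i = b - xstar t i
              rw [hwi]
            rw [hi]
        have hmw : m t * ‖b - xstar t i‖ ^ 2 ≤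
            ⟪gradC t i w - gradC t i (xstar t), b - xstar t i⟫ := by
          rw [← hnw, ← hsum]; exact hmonosum
        -- decompose through z
        have hdecomp : ⟪gradC t i w - gradC t i (xstar t), b - xstar t i⟫ ≤
            ⟪gradC t i w - gradC t i z, b - xstar t i⟫ := by
          have e1 : ⟪gradC t i w - gradC t i (xstar t), b - xstar t i⟫ =
              ⟪gradC t i w - gradC t i z, b - xstar t i⟫ +
              ⟪gradC t i z - gradC t i (xstar t), b - xstar t i⟫ := by
            rw [← inner_add_left]; congr 1; abel
          have e2 : ⟪gradC t i z - gradC t i (xstar t), b - xstar t i⟫ ≤ 0 := by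
            rw [inner_sub_left]
            have e3 : ⟪gradC t i z, b - xstar t i⟫ = -⟪gradC t i z, xstar t i - b⟫ := by
              rw [← inner_neg_right]; congr 1; abel
            rw [e3]
            linarith
          linarith
        -- Lipschitz bound
        have hlip : ⟪gradC t i w - gradC t i z, b - xstar t i⟫ ≤
            L t * ‖w - z‖ * ‖b - xstar t i‖ := by
          calc ⟪gradC t i w - gradC t i z, b - xstar t i⟫
              ≤ ‖gradC t i w - gradC t i z‖ * ‖b - xstar t i‖ := real_inner_le_norm _ _
            _ ≤ L t * ‖w - z‖ * ‖b - xstar t i‖ := by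
                apply mul_le_mul_of_nonneg_right _ (norm_nonneg _)
                exact hLip t i w z (by rw [hwi, hzi])
        -- norm of w - z
        have hwz : ‖w - z‖ ^ 2 = ‖Δ‖ ^ 2 - ‖Δ i‖ ^ 2 := by
          have hc : ∀ j : Fin N, ‖(w - z) j‖ ^ 2 =
              ‖Δ j‖ ^ 2 - (if j = i then ‖Δ i‖ ^ 2 else 0) := by
            intro j
            by_cases h : j = i
            · subst h
              have hj : (w - z) j = 0 := by
                show w j - z j = 0; rw [hwi, hzi, sub_self]
              rw [hj, norm_zero, if_pos rfl]
              ring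
            · have hj : (w - z) j = Δ j := by
                show w j - z j = xstar t j - x t j
                simp only [hw, hz, WithLp.ofLp_toLp, Function.update_of_ne h]
              rw [hj, if_neg h, sub_zero]
          rw [PiLp.norm_sq_eq_of_L2 E (w - z), PiLp.norm_sq_eq_of_L2 E Δ]
          rw [Finset.sum_congr rfl (fun j _ => hc j), Finset.sum_sub_distrib]
          simp
        -- combine: m ‖b - x*ᵢ‖ ≤ L ‖w - z‖
        have hkey : m t * ‖b - xstar t i‖ ≤ L t * ‖w - z‖ := by
          rcases eq_or_lt_of_le (norm_nonneg (b - xstar t i)) with h0 | h0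
          · rw [← h0, mul_zero]
            exact mul_nonneg (hL t) (norm_nonneg _)
          · have hch : m t * ‖b - xstar t i‖ ^ 2 ≤ L t * ‖w - z‖ * ‖b - xstar t i‖ :=
              le_trans hmw (le_trans hdecomp hlip)
            nlinarith
        have hsq : (m t * ‖b - xstar t i‖) ^ 2 ≤ (L t * ‖w - z‖) ^ 2 :=
          pow_le_pow_left₀ (mul_nonneg (hm t).le (norm_nonneg _)) hkey 2
        calc (m t) ^ 2 * ‖b - xstar t i‖ ^ 2 = (m t * ‖b - xstar t i‖) ^ 2 := by ring
          _ ≤ (L t * ‖w - z‖) ^ 2 := hsq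
          _ = (L t) ^ 2 * ‖w - z‖ ^ 2 := by ring
          _ = (L t) ^ 2 * (‖Δ‖ ^ 2 - ‖Δ i‖ ^ 2) := by rw [hwz]
      -- sum over i
      have hsumper : (m t) ^ 2 * ‖x (t + 1) - xstar t‖ ^ 2 ≤
          (L t) ^ 2 * (((N : ℝ) - 1) * ‖Δ‖ ^ 2) := by
        have e1 : ‖x (t + 1) - xstar t‖ ^ 2 = ∑ i, ‖x (t + 1) i - xstar t i‖ ^ 2 := by
          rw [PiLp.norm_sq_eq_of_L2]; rfl
        have e2 : ∑ i : Fin N, (‖Δ‖ ^ 2 - ‖Δ i‖ ^ 2) = ((N : ℝ) - 1) * ‖Δ‖ ^ 2 := by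
          rw [Finset.sum_sub_distrib, Finset.sum_const, ← PiLp.norm_sq_eq_of_L2 E Δ,
            Finset.card_univ, Fintype.card_fin, nsmul_eq_mul]
          ring
        calc (m t) ^ 2 * ‖x (t + 1) - xstar t‖ ^ 2
            = ∑ i, (m t) ^ 2 * ‖x (t + 1) i - xstar t i‖ ^ 2 := by
              rw [e1, Finset.mul_sum]
          _ ≤ ∑ i, (L t) ^ 2 * (‖Δ‖ ^ 2 - ‖Δ i‖ ^ 2) :=
              Finset.sum_le_sum (fun i _ => hper i)
          _ = (L t) ^ 2 * (((N : ℝ) - 1) * ‖Δ‖ ^ 2) := by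
              rw [← Finset.mul_sum, e2]
      -- conclude using ρm
      have hN1 : (0 : ℝ) ≤ (N : ℝ) - 1 := by
        have : (1 : ℝ) ≤ (N : ℝ) := by exact_mod_cast hN
        linarith
      have hsqrt : Real.sqrt ((N : ℝ) - 1) ^ 2 = (N : ℝ) - 1 := Real.sq_sqrt hN1
      have hρt : L t * Real.sqrt ((N : ℝ) - 1) ≤ ρm * m t := by
        have h := hρm t
        rw [div_le_iff₀ (hm t)] at h
        exact h
      have hΔnorm : ‖Δ‖ = ‖x t - xstar t‖ := norm_sub_rev _ _
      have hfin : (m t) ^ 2 * ‖x (t + 1) - xstar t‖ ^ 2 ≤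
          (m t) ^ 2 * (ρm * ‖x t - xstar t‖) ^ 2 := by
        calc (m t) ^ 2 * ‖x (t + 1) - xstar t‖ ^ 2
            ≤ (L t) ^ 2 * (((N : ℝ) - 1) * ‖Δ‖ ^ 2) := hsumper
          _ = (L t * Real.sqrt ((N : ℝ) - 1)) ^ 2 * ‖Δ‖ ^ 2 := by
              rw [mul_pow, hsqrt]; ring
          _ ≤ (ρm * m t) ^ 2 * ‖Δ‖ ^ 2 := by
              apply mul_le_mul_of_nonneg_right _ (sq_nonneg _)
              exact pow_le_pow_left₀ (mul_nonneg (hL t) (Real.sqrt_nonneg _)) hρt 2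
          _ = (m t) ^ 2 * (ρm * ‖Δ‖) ^ 2 := by ring
          _ = (m t) ^ 2 * (ρm * ‖x t - xstar t‖) ^ 2 := by rw [hΔnorm]
      have hm2 : (0 : ℝ) < (m t) ^ 2 := pow_pos (hm t) 2
      have hfin2 : ‖x (t + 1) - xstar t‖ ^ 2 ≤ (ρm * ‖x t - xstar t‖) ^ 2 :=
        le_of_mul_le_mul_left hfin hm2
      nlinarith [norm_nonneg (x (t + 1) - xstar t), norm_nonneg (x t - xstar t),
        mul_nonneg hρ0 (norm_nonneg (x t - xstar t))]
  -- Step 2: one-step recurrence for squared errors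
  have hrec : ∀ t, ‖x (t + 1) - xstar (t + 1)‖ ^ 2 ≤
      ρm * ‖x t - xstar t‖ ^ 2 + ‖xstar t - xstar (t + 1)‖ ^ 2 / (1 - ρm) := by
    intro t
    have htri : ‖x (t + 1) - xstar (t + 1)‖ ≤
        ρm * ‖x t - xstar t‖ + ‖xstar t - xstar (t + 1)‖ := by
      calc ‖x (t + 1) - xstar (t + 1)‖
          ≤ ‖x (t + 1) - xstar t‖ + ‖xstar t - xstar (t + 1)‖ := by
            have hsplit : x (t + 1) - xstar (t + 1) =
                (x (t + 1) - xstar t) + (xstar t - xstar (t + 1)) := by abel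
            rw [hsplit]; exact norm_add_le _ _
        _ ≤ ρm * ‖x t - xstar t‖ + ‖xstar t - xstar (t + 1)‖ := by
            linarith [key t]
    have hsq : ‖x (t + 1) - xstar (t + 1)‖ ^ 2 ≤
        (ρm * ‖x t - xstar t‖ + ‖xstar t - xstar (t + 1)‖) ^ 2 :=
      pow_le_pow_left₀ (norm_nonneg _) htri 2
    exact le_trans hsq (br_sq_step hρ0 hρm1 (norm_nonneg _) (norm_nonneg _))
  -- Step 3: summation
  intro T
  have hAnn : ∀ t : ℕ, (0 : ℝ) ≤ ‖x t - xstar t‖ ^ 2 := fun t => sq_nonneg _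
  have hVnn : ∀ t : ℕ, (0 : ℝ) ≤ ‖xstar t - xstar (t + 1)‖ ^ 2 := fun t => sq_nonneg _
  have hself : ∑ t ∈ Finset.Icc 1 T, ‖x t - xstar t‖ ^ 2 ≤
      ‖x 1 - xstar 1‖ ^ 2 + ρm * ∑ t ∈ Finset.Icc 1 T, ‖x t - xstar t‖ ^ 2 +
        (∑ t ∈ Finset.Icc 1 T, ‖xstar t - xstar (t + 1)‖ ^ 2) / (1 - ρm) := by
    rcases Nat.lt_or_ge T 1 with hT | hT
    · interval_cases T
      rw [show Finset.Icc 1 0 = (∅ : Finset ℕ) from Finset.Icc_eq_empty (by omega)]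
      simp only [Finset.sum_empty, mul_zero, zero_div, add_zero]
      exact hAnn 1
    · have hsplit : Finset.Icc 1 T = insert 1 (Finset.Icc 2 T) := by
        rw [show Finset.Icc 2 T = Finset.Ioc 1 T from Finset.Icc_add_one_left_eq_Ioc 1 T,
          Finset.Ioc_insert_left hT]
      have hnotmem : (1 : ℕ) ∉ Finset.Icc 2 T := by simp
      have hreindex : ∑ t ∈ Finset.Icc 2 T, ‖x t - xstar t‖ ^ 2 =
          ∑ t ∈ Finset.Icc 1 (T - 1), ‖x (t + 1) - xstar (t + 1)‖ ^ 2 := by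
        rw [show Finset.Icc 2 T = Finset.Icc (1 + 1) (T - 1 + 1) by
          rw [Nat.sub_add_cancel hT],
          ← Finset.map_add_right_Icc 1 (T - 1) 1, Finset.sum_map]
        rfl
      have hbound : ∑ t ∈ Finset.Icc 1 (T - 1), ‖x (t + 1) - xstar (t + 1)‖ ^ 2 ≤
          ∑ t ∈ Finset.Icc 1 (T - 1),
            (ρm * ‖x t - xstar t‖ ^ 2 + ‖xstar t - xstar (t + 1)‖ ^ 2 / (1 - ρm)) :=
        Finset.sum_le_sum (fun t _ => hrec t)
      have hmono2 : ∑ t ∈ Finset.Icc 1 (T - 1),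
            (ρm * ‖x t - xstar t‖ ^ 2 + ‖xstar t - xstar (t + 1)‖ ^ 2 / (1 - ρm)) ≤
          ∑ t ∈ Finset.Icc 1 T,
            (ρm * ‖x t - xstar t‖ ^ 2 + ‖xstar t - xstar (t + 1)‖ ^ 2 / (1 - ρm)) := by
        apply Finset.sum_le_sum_of_subset_of_nonneg
        · exact Finset.Icc_subset_Icc_right (by omega)
        · intro t _ _
          have h1 := hAnn t; have h2 := hVnn t
          have : (0:ℝ) ≤ ‖xstar t - xstar (t + 1)‖ ^ 2 / (1 - ρm) := div_nonneg h2 h1ρ.le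
          have : (0:ℝ) ≤ ρm * ‖x t - xstar t‖ ^ 2 := mul_nonneg hρ0 h1
          linarith
      have hdist : ∑ t ∈ Finset.Icc 1 T,
            (ρm * ‖x t - xstar t‖ ^ 2 + ‖xstar t - xstar (t + 1)‖ ^ 2 / (1 - ρm)) =
          ρm * ∑ t ∈ Finset.Icc 1 T, ‖x t - xstar t‖ ^ 2 +
            (∑ t ∈ Finset.Icc 1 T, ‖xstar t - xstar (t + 1)‖ ^ 2) / (1 - ρm) := by
        rw [Finset.sum_add_distrib, ← Finset.mul_sum, ← Finset.sum_div]
      calc ∑ t ∈ Finset.Icc 1 T, ‖x t - xstar t‖ ^ 2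
          = ‖x 1 - xstar 1‖ ^ 2 + ∑ t ∈ Finset.Icc 2 T, ‖x t - xstar t‖ ^ 2 := by
            rw [hsplit, Finset.sum_insert hnotmem]
        _ ≤ ‖x 1 - xstar 1‖ ^ 2 + ∑ t ∈ Finset.Icc 1 T,
              (ρm * ‖x t - xstar t‖ ^ 2 + ‖xstar t - xstar (t + 1)‖ ^ 2 / (1 - ρm)) := by
            rw [hreindex]; linarith [le_trans hbound hmono2]
        _ = ‖x 1 - xstar 1‖ ^ 2 + ρm * ∑ t ∈ Finset.Icc 1 T, ‖x t - xstar t‖ ^ 2 +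
              (∑ t ∈ Finset.Icc 1 T, ‖xstar t - xstar (t + 1)‖ ^ 2) / (1 - ρm) := by
            rw [hdist]; ring
  -- rearrange
  set S := ∑ t ∈ Finset.Icc 1 T, ‖x t - xstar t‖ ^ 2 with hSdef
  set W := ∑ t ∈ Finset.Icc 1 T, ‖xstar t - xstar (t + 1)‖ ^ 2 with hWdef
  have h1 : (1 - ρm) * S ≤ ‖x 1 - xstar 1‖ ^ 2 + W / (1 - ρm) := by nlinarith [hself]
  have h2 : S ≤ (‖x 1 - xstar 1‖ ^ 2 + W / (1 - ρm)) / (1 - ρm) := by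
    rw [le_div_iff₀ h1ρ]; linarith
  calc S ≤ (‖x 1 - xstar 1‖ ^ 2 + W / (1 - ρm)) / (1 - ρm) := h2
    _ = ‖x 1 - xstar 1‖ ^ 2 / (1 - ρm) + W / (1 - ρm) ^ 2 := by
        field_simp
end

section
/- For the time-varying best response algorithm, the dynamic regret of agent i satisfies DR_i(T) ≤ C_{i,1}(x_1) + W_{i,T} + L_0 Σ_{t=1}^T ‖x_{t+1} - x_t‖, where W_{i,T} = Σ_{t=1}^T sup_{x∈X} |C_{i,t}(x) - C_{i,t+1}(x)| is the function variation, assuming each C_{i,t}(x_i, ·) is L_0-Lipschitz in x_{-i} and C_{i,T+1} (or C_{i,t} for all t) is nonnegative. -/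
/-- Dynamic regret decomposition for the time-varying best response algorithm:
`DR_i(T) ≤ C_{i,1}(x_1) + W_{i,T} + L₀ Σ_{t=1}^T ‖x_{t+1} - x_t‖`, where `W t` bounds
`sup_{x ∈ X} |C_{i,t}(x) - C_{i,t+1}(x)|` (so `Σ_t W t` is the function variation). -/
theorem best_response_dynamic_regret_decomposition
    {N : ℕ} {E : Fin N → Type*}
    [∀ i, NormedAddCommGroup (E i)] [∀ i, InnerProductSpace ℝ (E i)]
    (X : ∀ i, Set (E i)) (C : ℕ → Fin N → PiLp 2 E → ℝ)
    (L₀ : ℝ) (hL₀ : 0 ≤ L₀) (i : Fin N)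
    (x : ℕ → PiLp 2 E) (hx : ∀ t j, x t j ∈ X j)
    -- `C_{i,t}(x_i, ·)` is `L₀`-Lipschitz in the other agents' actions
    (hLip₀ : ∀ t, ∀ y z : PiLp 2 E, y i = z i → |C t i y - C t i z| ≤ L₀ * ‖y - z‖)
    -- the costs are nonnegative
    (hCpos : ∀ t, ∀ y : PiLp 2 E, 0 ≤ C t i y)
    -- `W t` is (an upper bound for) `sup_{x ∈ X} |C_{i,t}(x) - C_{i,t+1}(x)|`
    (W : ℕ → ℝ)
    (hW : ∀ t, ∀ y : PiLp 2 E, (∀ j, y j ∈ X j) → |C t i y - C (t + 1) i y| ≤ W t)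
    -- best response update: `x_{i,t+1} = argmin_{x_i ∈ X_i} C_{i,t}(x_i, x_{-i,t})`
    (hBRmin : ∀ t j, x (t + 1) j ∈ X j ∧ ∀ yj ∈ X j,
      C t j (WithLp.toLp 2 (Function.update (x t) j (x (t + 1) j))) ≤ C t j (WithLp.toLp 2 (Function.update (x t) j yj))) :
    ∀ T : ℕ,
      ∑ t ∈ Finset.Icc 1 T,
          (C t i (x t) - C t i (WithLp.toLp 2 (Function.update (x t) i (x (t + 1) i)))) ≤
        C 1 i (x 1) + (∑ t ∈ Finset.Icc 1 T, W t) +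
          L₀ * ∑ t ∈ Finset.Icc 1 T, ‖x (t + 1) - x t‖ := by
  intro T
  -- norm of a vector zeroed at one coordinate is at most the original norm
  have hnorm : ∀ t : ℕ,
      ‖(show PiLp 2 E from WithLp.toLp 2 (Function.update (x t) i (x (t + 1) i))) - x (t + 1)‖ ≤ ‖x (t + 1) - x t‖ := by
    intro t
    have h2 : (0:ℝ) < (2 : ENNReal).toReal := by norm_num
    rw [PiLp.norm_eq_sum h2, PiLp.norm_eq_sum h2]
    apply Real.rpow_le_rpow (by positivity) _ (by positivity)
    apply Finset.sum_le_sum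
    intro j _
    by_cases hj : j = i
    · subst hj
      simp [PiLp.sub_apply, Function.update_self]
    · have : ((show PiLp 2 E from WithLp.toLp 2 (Function.update (x t) i (x (t + 1) i))) - x (t + 1)) j
          = x t j - x (t + 1) j := by
        simp [PiLp.sub_apply, Function.update_of_ne hj]
      rw [this]
      have : (x (t + 1) - x t) j = x (t + 1) j - x t j := rfl
      rw [this, ← norm_neg (x (t+1) j - x t j)]
      simp [neg_sub]
  -- per-step bound
  have key : ∀ t : ℕ,
      C t i (x t) - C t i (WithLp.toLp 2 (Function.update (x t) i (x (t + 1) i))) ≤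
        (C t i (x t) - C (t + 1) i (x (t + 1))) + W t + L₀ * ‖x (t + 1) - x t‖ := by
    intro t
    have hLip : |C t i (WithLp.toLp 2 (Function.update (x t) i (x (t + 1) i))) - C t i (x (t + 1))| ≤
        L₀ * ‖(show PiLp 2 E from WithLp.toLp 2 (Function.update (x t) i (x (t + 1) i))) - x (t + 1)‖ := by
      apply hLip₀
      simp [Function.update_self]
    have h1 : C t i (x (t + 1)) - C t i (WithLp.toLp 2 (Function.update (x t) i (x (t + 1) i))) ≤
        L₀ * ‖x (t + 1) - x t‖ := by
      have := (abs_le.mp hLip).1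
      have h3 := mul_le_mul_of_nonneg_left (hnorm t) hL₀
      linarith
    have h2 : C t i (x t) - C (t + 1) i (x (t + 1)) + (C (t + 1) i (x (t + 1)) - C t i (x (t + 1)))
        ≤ C t i (x t) - C (t + 1) i (x (t + 1)) + W t := by
      have := (abs_le.mp (hW t (x (t + 1)) (hx (t + 1)))).1
      linarith
    linarith
  -- telescoping bound
  have tel : ∀ S : ℕ, ∑ t ∈ Finset.Icc 1 S, (C t i (x t) - C (t + 1) i (x (t + 1))) ≤
      C 1 i (x 1) - C (S + 1) i (x (S + 1)) := by
    intro S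
    induction S with
    | zero => simp
    | succ n ih =>
      rw [Finset.sum_Icc_succ_top (by omega)]
      linarith
  calc ∑ t ∈ Finset.Icc 1 T,
          (C t i (x t) - C t i (WithLp.toLp 2 (Function.update (x t) i (x (t + 1) i))))
      ≤ ∑ t ∈ Finset.Icc 1 T,
          ((C t i (x t) - C (t + 1) i (x (t + 1))) + W t + L₀ * ‖x (t + 1) - x t‖) :=
        Finset.sum_le_sum fun t _ => key t
    _ = (∑ t ∈ Finset.Icc 1 T, (C t i (x t) - C (t + 1) i (x (t + 1)))) +
          (∑ t ∈ Finset.Icc 1 T, W t) + L₀ * ∑ t ∈ Finset.Icc 1 T, ‖x (t + 1) - x t‖ := by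
        rw [Finset.mul_sum, ← Finset.sum_add_distrib, ← Finset.sum_add_distrib]
    _ ≤ C 1 i (x 1) + (∑ t ∈ Finset.Icc 1 T, W t) +
          L₀ * ∑ t ∈ Finset.Icc 1 T, ‖x (t + 1) - x t‖ := by
        have := tel T
        have := hCpos (T + 1) (x (T + 1))
        linarith
end

section
/- Under the assumptions of the time-varying tracking theorem (m_t > L_t√(N-1) for all t, ρ_m = max_t ρ_t < 1, costs C_{i,t} L_0-Lipschitz in x_{-i}), the dynamic regret of the best response algorithm satisfies DR_i(T) ≤ C_{i,1}(x_1) + W_{i,T} + L_0 (ρ_m + 1) √T · √(‖x_1 - x_1*‖²/(1-ρ_m) + V_T/(1-ρ_m)²), hence DR_i(T) = O(W_{i,T} + √(T·V_T) + √T). -/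
open scoped RealInnerProductSpace


section auxBR
variable {N : ℕ} {E : Fin N → Type*} [∀ i, NormedAddCommGroup (E i)]
  [∀ i, InnerProductSpace ℝ (E i)]

def brUpd (a : PiLp 2 E) (j : Fin N) (v : E j) : PiLp 2 E := WithLp.toLp 2 (Function.update a j v)

lemma brUpd_eq (a : PiLp 2 E) (j : Fin N) (v : E j) :
    brUpd a j v = WithLp.toLp 2 (Function.update a j v) := rfl

lemma brUpd_apply_self (a : PiLp 2 E) (j : Fin N) (v : E j) : brUpd a j v j = v :=
  Function.update_self j v a

lemma brUpd_apply_ne (a : PiLp 2 E) {j k : Fin N} (hk : k ≠ j) (v : E j) :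
    brUpd a j v k = a k := Function.update_of_ne hk v a

lemma br_update_sub_update_norm_sq (a b : PiLp 2 E) (j : Fin N) (v : E j) :
    ‖brUpd a j v - brUpd b j v‖ ^ 2 = ‖a - b‖ ^ 2 - ‖a j - b j‖ ^ 2 := by
  rw [PiLp.norm_sq_eq_of_L2, PiLp.norm_sq_eq_of_L2,
    ← Finset.sum_erase_add _ _ (Finset.mem_univ j),
    ← Finset.sum_erase_add _ (fun k => ‖(a - b) k‖ ^ 2) (Finset.mem_univ j)]
  have hj : ‖(brUpd a j v - brUpd b j v) j‖ ^ 2 = 0 := by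
    simp [PiLp.sub_apply, brUpd_apply_self]
  rw [hj]
  have hcong : ∀ k ∈ Finset.univ.erase j,
      ‖(brUpd a j v - brUpd b j v) k‖ ^ 2 = ‖(a - b) k‖ ^ 2 := by
    intro k hk
    have hkj : k ≠ j := Finset.ne_of_mem_erase hk
    simp [PiLp.sub_apply, brUpd_apply_ne _ hkj]
  rw [Finset.sum_congr rfl hcong]
  simp [PiLp.sub_apply]

lemma br_update_sub_self_norm_sq (b : PiLp 2 E) (j : Fin N) (v : E j) :
    ‖brUpd b j v - b‖ ^ 2 = ‖v - b j‖ ^ 2 := by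
  rw [PiLp.norm_sq_eq_of_L2, Finset.sum_eq_single j]
  · simp [PiLp.sub_apply, brUpd_apply_self]
  · intro k _ hk
    simp [PiLp.sub_apply, brUpd_apply_ne _ hk]
  · simp

lemma br_sum_inner_single (z : PiLp 2 E) (j : Fin N) (v : E j) (G : ∀ k, E k) :
    ∑ k, ⟪G k, brUpd z j v k - z k⟫ = ⟪G j, v - z j⟫ := by
  rw [Finset.sum_eq_single j]
  · rw [brUpd_apply_self]
  · intro k _ hk
    rw [brUpd_apply_ne _ hk]
    simp
  · simp

lemma br_cs_sqrt {ι : Type*} (s : Finset ι) (f g : ι → ℝ) (hf : ∀ j ∈ s, 0 ≤ f j)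
    (hg : ∀ j ∈ s, 0 ≤ g j) :
    ∑ j ∈ s, f j * g j ≤ Real.sqrt (∑ j ∈ s, f j ^ 2) * Real.sqrt (∑ j ∈ s, g j ^ 2) := by
  have h0 : 0 ≤ ∑ j ∈ s, f j * g j :=
    Finset.sum_nonneg fun j hj => mul_nonneg (hf j hj) (hg j hj)
  calc ∑ j ∈ s, f j * g j = Real.sqrt ((∑ j ∈ s, f j * g j) ^ 2) := (Real.sqrt_sq h0).symm
    _ ≤ Real.sqrt ((∑ j ∈ s, f j ^ 2) * ∑ j ∈ s, g j ^ 2) :=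
        Real.sqrt_le_sqrt (Finset.sum_mul_sq_le_sq_mul_sq s f g)
    _ = _ := Real.sqrt_mul (Finset.sum_nonneg fun _ _ => sq_nonneg _) _

/-- One-step contraction of the simultaneous best-response map. -/
lemma br_contract (X : ∀ i, Set (E i)) (g : ∀ j : Fin N, PiLp 2 E → E j)
    (mt Lt ρm : ℝ) (hmt : 0 < mt) (hLt : 0 ≤ Lt) (hNpos : 0 < N)
    (hρ : Lt * Real.sqrt ((N : ℝ) - 1) / mt ≤ ρm) (hρ0 : 0 ≤ ρm)
    (xc xn xs : PiLp 2 E)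
    (hxn : ∀ j, xn j ∈ X j) (hxs : ∀ j, xs j ∈ X j)
    (hmono : ∀ y z : PiLp 2 E, (∀ j, y j ∈ X j) → (∀ j, z j ∈ X j) →
      mt * ‖y - z‖ ^ 2 ≤ ∑ j, ⟪g j y - g j z, y j - z j⟫)
    (hLip : ∀ j : Fin N, ∀ y z : PiLp 2 E, y j = z j → ‖g j y - g j z‖ ≤ Lt * ‖y - z‖)
    (hFOC : ∀ j, (0:ℝ) ≤ ⟪g j (brUpd xc j (xn j)), xs j - xn j⟫)
    (hNash : ∀ j, (0:ℝ) ≤ ⟪g j xs, xn j - xs j⟫) :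
    ‖xn - xs‖ ≤ ρm * ‖xc - xs‖ := by
  have hN1 : (0:ℝ) ≤ (N : ℝ) - 1 := by
    have : (1:ℝ) ≤ (N:ℝ) := by exact_mod_cast hNpos
    linarith
  -- the per-player inequality
  have key : ∀ j : Fin N, mt * ‖xn j - xs j‖ ^ 2 ≤
      Lt * ‖brUpd xs j (xn j) - brUpd xc j (xn j)‖ * ‖xn j - xs j‖ := by
    intro j
    set w := brUpd xs j (xn j) with hw
    set u := brUpd xc j (xn j) with hu
    have hwX : ∀ k, w k ∈ X k := by
      intro k
      by_cases hk : k = j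
      · subst hk; rw [hw, brUpd_apply_self]; exact hxn k
      · rw [hw, brUpd_apply_ne _ hk]; exact hxs k
    have h1 := hmono w xs hwX hxs
    rw [hw, br_update_sub_self_norm_sq,
      br_sum_inner_single xs j (xn j) (fun k => g k (brUpd xs j (xn j)) - g k xs)] at h1
    have hf := hFOC j
    have hn := hNash j
    rw [show xs j - xn j = -(xn j - xs j) by abel, inner_neg_right] at hf
    have h2 : ⟪g j u - g j xs, xn j - xs j⟫ ≤ 0 := by
      rw [inner_sub_left]; linarith
    have h3 : mt * ‖xn j - xs j‖ ^ 2 ≤ ⟪g j w - g j u, xn j - xs j⟫ := by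
      have e : ⟪g j w - g j u, xn j - xs j⟫
          = ⟪g j w - g j xs, xn j - xs j⟫ - ⟪g j u - g j xs, xn j - xs j⟫ := by
        rw [inner_sub_left, inner_sub_left, inner_sub_left]; ring
      rw [e]; linarith
    have h4 := real_inner_le_norm (g j w - g j u) (xn j - xs j)
    have h5 : ‖g j w - g j u‖ ≤ Lt * ‖w - u‖ :=
      hLip j w u (by rw [hw, hu, brUpd_apply_self, brUpd_apply_self])
    have h6 : ‖g j w - g j u‖ * ‖xn j - xs j‖ ≤ Lt * ‖w - u‖ * ‖xn j - xs j‖ :=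
      mul_le_mul_of_nonneg_right h5 (norm_nonneg _)
    calc mt * ‖xn j - xs j‖ ^ 2 ≤ ⟪g j w - g j u, xn j - xs j⟫ := h3
      _ ≤ ‖g j w - g j u‖ * ‖xn j - xs j‖ := h4
      _ ≤ Lt * ‖w - u‖ * ‖xn j - xs j‖ := h6
  -- sum over players
  have hsumd : ∑ j, ‖xn j - xs j‖ ^ 2 = ‖xn - xs‖ ^ 2 := by
    rw [PiLp.norm_sq_eq_of_L2]
    exact Finset.sum_congr rfl fun j _ => by rw [PiLp.sub_apply]
  have hsumw : ∑ j, ‖brUpd xs j (xn j) - brUpd xc j (xn j)‖ ^ 2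
      = ((N : ℝ) - 1) * ‖xc - xs‖ ^ 2 := by
    have h1 : ∀ j : Fin N, ‖brUpd xs j (xn j) - brUpd xc j (xn j)‖ ^ 2
        = ‖xs - xc‖ ^ 2 - ‖xs j - xc j‖ ^ 2 := fun j =>
      br_update_sub_update_norm_sq xs xc j (xn j)
    rw [Finset.sum_congr rfl fun j _ => h1 j, Finset.sum_sub_distrib]
    have h2 : ∑ j : Fin N, ‖xs j - xc j‖ ^ 2 = ‖xs - xc‖ ^ 2 := by
      rw [PiLp.norm_sq_eq_of_L2]
      exact Finset.sum_congr rfl fun j _ => by rw [PiLp.sub_apply]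
    rw [h2, Finset.sum_const, Finset.card_univ, Fintype.card_fin, nsmul_eq_mul,
      norm_sub_rev]
    ring
  have hmain : mt * ‖xn - xs‖ ^ 2 ≤
      Lt * (Real.sqrt ((N : ℝ) - 1) * ‖xc - xs‖) * ‖xn - xs‖ := by
    have hcs := br_cs_sqrt Finset.univ
        (fun j => ‖brUpd xs j (xn j) - brUpd xc j (xn j)‖) (fun j => ‖xn j - xs j‖)
        (fun j _ => norm_nonneg _) (fun j _ => norm_nonneg _)
    rw [hsumw, hsumd] at hcs
    have hsq1 : Real.sqrt (((N : ℝ) - 1) * ‖xc - xs‖ ^ 2)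
        = Real.sqrt ((N : ℝ) - 1) * ‖xc - xs‖ := by
      rw [Real.sqrt_mul hN1, Real.sqrt_sq (norm_nonneg _)]
    have hsq2 : Real.sqrt (‖xn - xs‖ ^ 2) = ‖xn - xs‖ := Real.sqrt_sq (norm_nonneg _)
    rw [hsq1, hsq2] at hcs
    have hsum_le : ∑ j, ‖brUpd xs j (xn j) - brUpd xc j (xn j)‖ * ‖xn j - xs j‖
        ≤ Real.sqrt ((N : ℝ) - 1) * ‖xc - xs‖ * ‖xn - xs‖ := by simpa using hcs
    calc mt * ‖xn - xs‖ ^ 2 = ∑ j, mt * ‖xn j - xs j‖ ^ 2 := by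
          rw [← Finset.mul_sum, hsumd]
      _ ≤ ∑ j, Lt * ‖brUpd xs j (xn j) - brUpd xc j (xn j)‖ * ‖xn j - xs j‖ :=
          Finset.sum_le_sum fun j _ => key j
      _ = Lt * ∑ j, ‖brUpd xs j (xn j) - brUpd xc j (xn j)‖ * ‖xn j - xs j‖ := by
          rw [Finset.mul_sum]; exact Finset.sum_congr rfl fun j _ => by ring
      _ ≤ Lt * (Real.sqrt ((N : ℝ) - 1) * ‖xc - xs‖ * ‖xn - xs‖) :=
          mul_le_mul_of_nonneg_left hsum_le hLt
      _ = Lt * (Real.sqrt ((N : ℝ) - 1) * ‖xc - xs‖) * ‖xn - xs‖ := by ring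
  rcases eq_or_lt_of_le (norm_nonneg (xn - xs)) with hS | hS
  · rw [← hS]
    exact mul_nonneg hρ0 (norm_nonneg _)
  · have h7 : mt * ‖xn - xs‖ ≤ Lt * (Real.sqrt ((N : ℝ) - 1) * ‖xc - xs‖) := by
      have := hmain
      rw [pow_two] at this
      have h8 : mt * ‖xn - xs‖ * ‖xn - xs‖ ≤
          Lt * (Real.sqrt ((N : ℝ) - 1) * ‖xc - xs‖) * ‖xn - xs‖ := by
        calc mt * ‖xn - xs‖ * ‖xn - xs‖ = mt * (‖xn - xs‖ * ‖xn - xs‖) := by ring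
          _ ≤ _ := this
      exact le_of_mul_le_mul_right h8 hS
    have h9 : ‖xn - xs‖ ≤ Lt * Real.sqrt ((N : ℝ) - 1) / mt * ‖xc - xs‖ := by
      rw [div_mul_eq_mul_div, le_div_iff₀ hmt]
      calc ‖xn - xs‖ * mt = mt * ‖xn - xs‖ := by ring
        _ ≤ Lt * (Real.sqrt ((N : ℝ) - 1) * ‖xc - xs‖) := h7
        _ = Lt * Real.sqrt ((N : ℝ) - 1) * ‖xc - xs‖ := by ring
    exact h9.trans (mul_le_mul_of_nonneg_right hρ (norm_nonneg _))

end auxBR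

lemma br_sq_contraction {ρ a b : ℝ} (hρ0 : 0 ≤ ρ) (hρ1 : ρ < 1) :
    (ρ * a + b) ^ 2 ≤ ρ * a ^ 2 + b ^ 2 / (1 - ρ) := by
  have h1 : (0:ℝ) < 1 - ρ := by linarith
  have hc : b ^ 2 / (1 - ρ) * (1 - ρ) = b ^ 2 := div_mul_cancel₀ _ (ne_of_gt h1)
  nlinarith [mul_nonneg hρ0 (sq_nonneg ((1 - ρ) * a - b)), div_nonneg (sq_nonneg b) h1.le]

lemma br_le_of_sq_le_sq {a b : ℝ} (h : a ^ 2 ≤ b ^ 2) (ha : 0 ≤ a) (hb : 0 ≤ b) : a ≤ b := by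
  nlinarith

lemma br_tele (f : ℕ → ℝ) : ∀ T : ℕ,
    ∑ t ∈ Finset.Icc 1 T, (f t - f (t + 1)) = f 1 - f (T + 1) := by
  intro T
  induction T with
  | zero => simp
  | succ T ih =>
      rw [Finset.sum_Icc_succ_top (by omega), ih]
      ring


/-- Dynamic regret bound for the time-varying best response algorithm:
`DR_i(T) ≤ C_{i,1}(x_1) + W_{i,T} + L₀ (ρ_m+1) √T √(‖x_1-x*_1‖²/(1-ρ_m) + V_T/(1-ρ_m)²)`,
hence `DR_i(T) = O(W_{i,T} + √(T V_T) + √T)`. -/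
theorem best_response_dynamic_regret_bound
    {N : ℕ} {E : Fin N → Type*}
    [∀ i, NormedAddCommGroup (E i)] [∀ i, InnerProductSpace ℝ (E i)]
    (X : ∀ i, Set (E i)) (C : ℕ → Fin N → PiLp 2 E → ℝ)
    (gradC : ℕ → ∀ i : Fin N, PiLp 2 E → E i)
    (m L : ℕ → ℝ) (ρm L₀ : ℝ) (hm : ∀ t, 0 < m t) (hL : ∀ t, 0 ≤ L t) (hL₀ : 0 ≤ L₀)
    (hmL : ∀ t, L t * Real.sqrt ((N : ℝ) - 1) < m t)
    -- `ρ_m = max_t ρ_t < 1`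
    (hρm : ∀ t, L t * Real.sqrt ((N : ℝ) - 1) / m t ≤ ρm) (hρm1 : ρm < 1)
    (i : Fin N)
    (x : ℕ → PiLp 2 E) (xstar : ℕ → PiLp 2 E)
    (hx : ∀ t j, x t j ∈ X j) (hxs : ∀ t j, xstar t j ∈ X j)
    -- the episode-t game is `m_t`-strongly monotone
    (hmono : ∀ t, ∀ y z : PiLp 2 E, (∀ j, y j ∈ X j) → (∀ j, z j ∈ X j) →
      m t * ‖y - z‖ ^ 2 ≤ ∑ j, ⟪gradC t j y - gradC t j z, y j - z j⟫)
    -- `∇_j C_{j,t}(x_j, ·)` is `L_t`-Lipschitz in the other agents' actions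
    (hLip : ∀ t, ∀ j : Fin N, ∀ y z : PiLp 2 E, y j = z j →
      ‖gradC t j y - gradC t j z‖ ≤ L t * ‖y - z‖)
    -- `C_{i,t}(x_i, ·)` is `L₀`-Lipschitz in the other agents' actions
    (hLip₀ : ∀ t, ∀ y z : PiLp 2 E, y i = z i → |C t i y - C t i z| ≤ L₀ * ‖y - z‖)
    (hCpos : ∀ t, ∀ y : PiLp 2 E, 0 ≤ C t i y)
    -- `W t` is (an upper bound for) `sup_{x ∈ X} |C_{i,t}(x) - C_{i,t+1}(x)|`
    (W : ℕ → ℝ)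
    (hW : ∀ t, ∀ y : PiLp 2 E, (∀ j, y j ∈ X j) → |C t i y - C (t + 1) i y| ≤ W t)
    (hBRmin : ∀ t j, x (t + 1) j ∈ X j ∧ ∀ yj ∈ X j,
      C t j (WithLp.toLp 2 (Function.update (x t) j (x (t + 1) j))) ≤
        C t j (WithLp.toLp 2 (Function.update (x t) j yj)))
    (hFOC : ∀ t j, ∀ yj ∈ X j,
      (0 : ℝ) ≤ ⟪gradC t j (WithLp.toLp 2 (Function.update (x t) j (x (t + 1) j))), yj - x (t + 1) j⟫)
    (hNash : ∀ t j, ∀ yj ∈ X j, (0 : ℝ) ≤ ⟪gradC t j (xstar t), yj - xstar t j⟫) :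
    ∀ T : ℕ,
      ∑ t ∈ Finset.Icc 1 T,
          (C t i (x t) - C t i (WithLp.toLp 2 (Function.update (x t) i (x (t + 1) i)))) ≤
        C 1 i (x 1) + (∑ t ∈ Finset.Icc 1 T, W t) +
          L₀ * (ρm + 1) * Real.sqrt (T : ℝ) *
            Real.sqrt (‖x 1 - xstar 1‖ ^ 2 / (1 - ρm) +
              (∑ t ∈ Finset.Icc 1 T, ‖xstar t - xstar (t + 1)‖ ^ 2) / (1 - ρm) ^ 2) := by
  intro T
  have hNpos : 0 < N := i.pos
  have hρ0 : 0 ≤ ρm :=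
    le_trans (div_nonneg (mul_nonneg (hL 0) (Real.sqrt_nonneg _)) (hm 0).le) (hρm 0)
  have h1ρ : (0:ℝ) < 1 - ρm := by linarith
  -- one-step contraction towards the current equilibrium
  have contract : ∀ t, ‖x (t + 1) - xstar t‖ ≤ ρm * ‖x t - xstar t‖ := by
    intro t
    refine br_contract X (gradC t) (m t) (L t) ρm (hm t) (hL t) hNpos (hρm t) hρ0
      (x t) (x (t + 1)) (xstar t) (hx (t + 1)) (hxs t) (hmono t) (hLip t)
      (fun j => ?_) (fun j => hNash t j (x (t + 1) j) (hx (t + 1) j))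
    rw [brUpd_eq]
    exact hFOC t j (xstar t j) (hxs t j)
  -- squared tracking error recursion
  have step : ∀ t, ‖x (t + 1) - xstar (t + 1)‖ ^ 2 ≤
      ρm * ‖x t - xstar t‖ ^ 2 + ‖xstar t - xstar (t + 1)‖ ^ 2 / (1 - ρm) := by
    intro t
    have htri : ‖x (t + 1) - xstar (t + 1)‖ ≤
        ρm * ‖x t - xstar t‖ + ‖xstar t - xstar (t + 1)‖ := by
      calc ‖x (t + 1) - xstar (t + 1)‖
          = ‖(x (t + 1) - xstar t) + (xstar t - xstar (t + 1))‖ := by congr 1; abel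
        _ ≤ ‖x (t + 1) - xstar t‖ + ‖xstar t - xstar (t + 1)‖ := norm_add_le _ _
        _ ≤ ρm * ‖x t - xstar t‖ + ‖xstar t - xstar (t + 1)‖ :=
            add_le_add (contract t) le_rfl
    have h2 : ‖x (t + 1) - xstar (t + 1)‖ ^ 2 ≤
        (ρm * ‖x t - xstar t‖ + ‖xstar t - xstar (t + 1)‖) ^ 2 :=
      pow_le_pow_left₀ (norm_nonneg _) htri 2
    exact h2.trans (br_sq_contraction hρ0 hρm1)
  -- summed tracking error recursion
  have Hrec : ∀ S : ℕ, ∑ t ∈ Finset.Icc 1 (S + 1), ‖x t - xstar t‖ ^ 2 ≤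
      ‖x 1 - xstar 1‖ ^ 2 + ρm * ∑ t ∈ Finset.Icc 1 S, ‖x t - xstar t‖ ^ 2 +
        (∑ t ∈ Finset.Icc 1 S, ‖xstar t - xstar (t + 1)‖ ^ 2) / (1 - ρm) := by
    intro S
    induction S with
    | zero => simp
    | succ S ih =>
        rw [Finset.sum_Icc_succ_top (show 1 ≤ S + 1 + 1 by omega),
          Finset.sum_Icc_succ_top (show 1 ≤ S + 1 by omega)
            (fun t => ‖x t - xstar t‖ ^ 2),
          Finset.sum_Icc_succ_top (show 1 ≤ S + 1 by omega)
            (fun t => ‖xstar t - xstar (t + 1)‖ ^ 2), add_div, mul_add]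
        rw [Finset.sum_Icc_succ_top (show 1 ≤ S + 1 by omega)
          (fun t => ‖x t - xstar t‖ ^ 2)] at ih
        have hstep := step (S + 1)
        linarith
  -- tracking error bound
  have track : ∑ t ∈ Finset.Icc 1 T, ‖x t - xstar t‖ ^ 2 ≤
      ‖x 1 - xstar 1‖ ^ 2 / (1 - ρm) +
        (∑ t ∈ Finset.Icc 1 T, ‖xstar t - xstar (t + 1)‖ ^ 2) / (1 - ρm) ^ 2 := by
    have hsub : ∑ t ∈ Finset.Icc 1 T, ‖x t - xstar t‖ ^ 2 ≤
        ∑ t ∈ Finset.Icc 1 (T + 1), ‖x t - xstar t‖ ^ 2 :=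
      Finset.sum_le_sum_of_subset_of_nonneg
        (Finset.Icc_subset_Icc_right (by omega)) (fun t _ _ => sq_nonneg _)
    have h := Hrec T
    have h2 : (1 - ρm) * (∑ t ∈ Finset.Icc 1 T, ‖x t - xstar t‖ ^ 2) ≤
        ‖x 1 - xstar 1‖ ^ 2 +
          (∑ t ∈ Finset.Icc 1 T, ‖xstar t - xstar (t + 1)‖ ^ 2) / (1 - ρm) := by
      have hexp : (1 - ρm) * (∑ t ∈ Finset.Icc 1 T, ‖x t - xstar t‖ ^ 2)
          = (∑ t ∈ Finset.Icc 1 T, ‖x t - xstar t‖ ^ 2) -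
            ρm * ∑ t ∈ Finset.Icc 1 T, ‖x t - xstar t‖ ^ 2 := by ring
      linarith
    calc ∑ t ∈ Finset.Icc 1 T, ‖x t - xstar t‖ ^ 2
        = (1 - ρm) * (∑ t ∈ Finset.Icc 1 T, ‖x t - xstar t‖ ^ 2) / (1 - ρm) :=
          (mul_div_cancel_left₀ _ (ne_of_gt h1ρ)).symm
      _ ≤ (‖x 1 - xstar 1‖ ^ 2 +
            (∑ t ∈ Finset.Icc 1 T, ‖xstar t - xstar (t + 1)‖ ^ 2) / (1 - ρm)) / (1 - ρm) := by
          gcongr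
      _ = ‖x 1 - xstar 1‖ ^ 2 / (1 - ρm) +
            (∑ t ∈ Finset.Icc 1 T, ‖xstar t - xstar (t + 1)‖ ^ 2) / (1 - ρm) ^ 2 := by
          rw [add_div, div_div, ← pow_two]
  -- per-step regret bound
  have per_t : ∀ t, C t i (x t) - C t i (WithLp.toLp 2 (Function.update (x t) i (x (t + 1) i))) ≤
      (C t i (x t) - C (t + 1) i (x (t + 1))) + W t +
        L₀ * ((ρm + 1) * ‖x t - xstar t‖) := by
    intro t
    rw [← brUpd_eq]
    have hWt : C (t + 1) i (x (t + 1)) - C t i (x (t + 1)) ≤ W t := by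
      have h := abs_le.mp (hW t (x (t + 1)) (hx (t + 1)))
      linarith [h.1]
    have hnorm : ‖x (t + 1) - brUpd (x t) i (x (t + 1) i)‖ ≤ ‖x (t + 1) - x t‖ := by
      have hup : brUpd (x (t + 1)) i (x (t + 1) i) = x (t + 1) :=
        by rw [brUpd_eq, Function.update_eq_self, WithLp.toLp_ofLp]
      have hsq : ‖x (t + 1) - brUpd (x t) i (x (t + 1) i)‖ ^ 2 ≤ ‖x (t + 1) - x t‖ ^ 2 := by
        calc ‖x (t + 1) - brUpd (x t) i (x (t + 1) i)‖ ^ 2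
            = ‖brUpd (x (t + 1)) i (x (t + 1) i) - brUpd (x t) i (x (t + 1) i)‖ ^ 2 := by
              rw [hup]
          _ = ‖x (t + 1) - x t‖ ^ 2 - ‖x (t + 1) i - x t i‖ ^ 2 :=
              br_update_sub_update_norm_sq (x (t + 1)) (x t) i (x (t + 1) i)
          _ ≤ ‖x (t + 1) - x t‖ ^ 2 := by nlinarith [sq_nonneg ‖x (t + 1) i - x t i‖]
      exact br_le_of_sq_le_sq hsq (norm_nonneg _) (norm_nonneg _)
    have hL1 : C t i (x (t + 1)) - C t i (brUpd (x t) i (x (t + 1) i)) ≤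
        L₀ * ‖x (t + 1) - x t‖ := by
      have habs := abs_le.mp (hLip₀ t (x (t + 1)) (brUpd (x t) i (x (t + 1) i))
        (by rw [brUpd_apply_self]))
      calc C t i (x (t + 1)) - C t i (brUpd (x t) i (x (t + 1) i))
          ≤ L₀ * ‖x (t + 1) - brUpd (x t) i (x (t + 1) i)‖ := habs.2
        _ ≤ L₀ * ‖x (t + 1) - x t‖ := mul_le_mul_of_nonneg_left hnorm hL₀
    have hdx : ‖x (t + 1) - x t‖ ≤ (ρm + 1) * ‖x t - xstar t‖ := by
      have hrev : ‖xstar t - x t‖ = ‖x t - xstar t‖ := norm_sub_rev _ _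
      calc ‖x (t + 1) - x t‖ = ‖(x (t + 1) - xstar t) + (xstar t - x t)‖ := by
            congr 1; abel
        _ ≤ ‖x (t + 1) - xstar t‖ + ‖xstar t - x t‖ := norm_add_le _ _
        _ ≤ ρm * ‖x t - xstar t‖ + ‖xstar t - x t‖ := add_le_add (contract t) le_rfl
        _ = (ρm + 1) * ‖x t - xstar t‖ := by rw [hrev]; ring
    have hL2 : L₀ * ‖x (t + 1) - x t‖ ≤ L₀ * ((ρm + 1) * ‖x t - xstar t‖) :=
      mul_le_mul_of_nonneg_left hdx hL₀
    linarith
  -- Cauchy–Schwarz over time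
  have hcs2 : ∑ t ∈ Finset.Icc 1 T, ‖x t - xstar t‖ ≤
      Real.sqrt (T : ℝ) * Real.sqrt (∑ t ∈ Finset.Icc 1 T, ‖x t - xstar t‖ ^ 2) := by
    have h := br_cs_sqrt (Finset.Icc 1 T) (fun _ => (1:ℝ)) (fun t => ‖x t - xstar t‖)
      (fun _ _ => zero_le_one) (fun t _ => norm_nonneg _)
    simpa [Nat.card_Icc] using h
  have hsqrt : Real.sqrt (∑ t ∈ Finset.Icc 1 T, ‖x t - xstar t‖ ^ 2) ≤
      Real.sqrt (‖x 1 - xstar 1‖ ^ 2 / (1 - ρm) +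
        (∑ t ∈ Finset.Icc 1 T, ‖xstar t - xstar (t + 1)‖ ^ 2) / (1 - ρm) ^ 2) :=
    Real.sqrt_le_sqrt track
  -- put everything together
  have hsum : ∑ t ∈ Finset.Icc 1 T,
      (C t i (x t) - C t i (WithLp.toLp 2 (Function.update (x t) i (x (t + 1) i)))) ≤
      (C 1 i (x 1) - C (T + 1) i (x (T + 1))) + (∑ t ∈ Finset.Icc 1 T, W t) +
        L₀ * (ρm + 1) * ∑ t ∈ Finset.Icc 1 T, ‖x t - xstar t‖ := by
    calc ∑ t ∈ Finset.Icc 1 T,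
        (C t i (x t) - C t i (WithLp.toLp 2 (Function.update (x t) i (x (t + 1) i))))
        ≤ ∑ t ∈ Finset.Icc 1 T, ((C t i (x t) - C (t + 1) i (x (t + 1))) + W t +
            L₀ * ((ρm + 1) * ‖x t - xstar t‖)) :=
          Finset.sum_le_sum fun t _ => per_t t
      _ = (∑ t ∈ Finset.Icc 1 T, (C t i (x t) - C (t + 1) i (x (t + 1)))) +
            (∑ t ∈ Finset.Icc 1 T, W t) +
            ∑ t ∈ Finset.Icc 1 T, L₀ * ((ρm + 1) * ‖x t - xstar t‖) := by
          rw [Finset.sum_add_distrib, Finset.sum_add_distrib]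
      _ = (C 1 i (x 1) - C (T + 1) i (x (T + 1))) + (∑ t ∈ Finset.Icc 1 T, W t) +
            L₀ * (ρm + 1) * ∑ t ∈ Finset.Icc 1 T, ‖x t - xstar t‖ := by
          rw [br_tele (fun t => C t i (x t)) T, Finset.mul_sum]
          congr 1
          exact Finset.sum_congr rfl fun t _ => by ring
  have hfinal : L₀ * (ρm + 1) * ∑ t ∈ Finset.Icc 1 T, ‖x t - xstar t‖ ≤
      L₀ * (ρm + 1) * Real.sqrt (T : ℝ) *
        Real.sqrt (‖x 1 - xstar 1‖ ^ 2 / (1 - ρm) +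
          (∑ t ∈ Finset.Icc 1 T, ‖xstar t - xstar (t + 1)‖ ^ 2) / (1 - ρm) ^ 2) := by
    have hLρ : 0 ≤ L₀ * (ρm + 1) := mul_nonneg hL₀ (by linarith)
    calc L₀ * (ρm + 1) * ∑ t ∈ Finset.Icc 1 T, ‖x t - xstar t‖
        ≤ L₀ * (ρm + 1) * (Real.sqrt (T : ℝ) *
            Real.sqrt (∑ t ∈ Finset.Icc 1 T, ‖x t - xstar t‖ ^ 2)) :=
          mul_le_mul_of_nonneg_left hcs2 hLρ
      _ ≤ L₀ * (ρm + 1) * (Real.sqrt (T : ℝ) *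
            Real.sqrt (‖x 1 - xstar 1‖ ^ 2 / (1 - ρm) +
              (∑ t ∈ Finset.Icc 1 T, ‖xstar t - xstar (t + 1)‖ ^ 2) / (1 - ρm) ^ 2)) := by
          apply mul_le_mul_of_nonneg_left _ hLρ
          exact mul_le_mul_of_nonneg_left hsqrt (Real.sqrt_nonneg _)
      _ = L₀ * (ρm + 1) * Real.sqrt (T : ℝ) *
            Real.sqrt (‖x 1 - xstar 1‖ ^ 2 / (1 - ρm) +
              (∑ t ∈ Finset.Icc 1 T, ‖xstar t - xstar (t + 1)‖ ^ 2) / (1 - ρm) ^ 2) := by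
          ring
  have hCT := hCpos (T + 1) (x (T + 1))
  linarith
end
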